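/- arXiv:1109.0609 — 6 statements merged into one kernel-verified Lean document; each statement's English description precedes it below -/
import Mathlib

section
/- Let 0 ≤ α < 1. If f(z) = z + Σ_{n≥2} a_n z^n satisfies Σ_{n≥2} n(n-1)|a_n| ≤ (1-α)/(2-α), then Σ_{n≥2} n(n-α)|a_n| ≤ 1-α, and hence |z f''(z)/f'(z)| < 1-α for all z in the unit disk. -/
/-!
Write `b n = ‖a n‖`. For `n ≥ 2` one has `n (n - α) ≤ (2 - α) n (n - 1)`, the difference being
`(1 - α) n (n - 2)`; summing gives `Σ n (n - α) b n ≤ 1 - α`. For `|z| = r < 1`,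
`|z f''(z)| ≤ Σ n (n - 1) b n r ^ (n - 1)` and `|f'(z)| ≥ 1 - Σ n b n r ^ (n - 1)`, so
`|z f''(z)| < (1 - α) |f'(z)|` follows from `Σ n (n - α) b n r ^ (n - 1) ≤ r (1 - α) < 1 - α`.
-/

open Metric

theorem summable_and_tsum_mul_sub_le_of_tsum_mul_sub_one_le {α : ℝ} (hα : α < 1) {b : ℕ → ℝ}
    (hb : ∀ n, 0 ≤ b n)
    (hsum : Summable fun n : ℕ => (n : ℝ) * ((n : ℝ) - 1) * b n)
    (h : ∑' n : ℕ, (n : ℝ) * ((n : ℝ) - 1) * b n ≤ (1 - α) / (2 - α)) :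
    (Summable fun n : ℕ => ((n : ℝ) + 2) * ((n : ℝ) + 2 - α) * b (n + 2)) ∧
      ∑' n : ℕ, ((n : ℝ) + 2) * ((n : ℝ) + 2 - α) * b (n + 2) ≤ 1 - α := by
  have hshift : Summable fun n : ℕ => ((n : ℝ) + 2) * ((n : ℝ) + 1) * b (n + 2) :=
    ((summable_nat_add_iff 2).2 hsum).congr fun n => by push_cast; ring
  have hterm : ∀ n : ℕ, ((n : ℝ) + 2) * ((n : ℝ) + 2 - α) * b (n + 2) ≤
      (2 - α) * (((n : ℝ) + 2) * ((n : ℝ) + 1) * b (n + 2)) := fun n => by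
    have hα' : 0 < 1 - α := by linarith
    have := hb (n + 2)
    have : 0 ≤ ((n : ℝ) + 2) * b (n + 2) * (n * (1 - α)) := by positivity
    linarith
  have hsummable := hshift.mul_left (2 - α) |>.of_nonneg_of_le
    (fun n => mul_nonneg (mul_nonneg (by positivity) (by linarith)) (hb (n + 2))) hterm
  refine ⟨hsummable, ?_⟩
  calc ∑' n : ℕ, ((n : ℝ) + 2) * ((n : ℝ) + 2 - α) * b (n + 2)
      ≤ ∑' n : ℕ, (2 - α) * (((n : ℝ) + 2) * ((n : ℝ) + 1) * b (n + 2)) :=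
        hsummable.tsum_le_tsum hterm (hshift.mul_left _)
    _ = (2 - α) * ∑' n : ℕ, (n : ℝ) * ((n : ℝ) - 1) * b n := by
        rw [tsum_mul_left, ← hsum.sum_add_tsum_nat_add 2]
        simp only [Finset.sum_range_succ, Finset.sum_range_zero]
        push_cast
        ring_nf
    _ ≤ (2 - α) * ((1 - α) / (2 - α)) := by gcongr; linarith
    _ = 1 - α := mul_div_cancel₀ _ (by linarith)

/-- With `b n = ‖a (n + 2)‖` and `r = ‖z‖`, `u n` bounds the norm of the `(n + 1)`-st term of
`f' z - 1` and `(n + 1) * u n` that of the `n`-th term of `z * f'' z`. -/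
theorem summable_and_tsum_mul_pow_le {α r : ℝ} (hα : α < 1) (hr₀ : 0 ≤ r) (hr₁ : r ≤ 1)
    {b : ℕ → ℝ} (hb : ∀ n, 0 ≤ b n)
    (hB : Summable fun n : ℕ => ((n : ℝ) + 2) * ((n : ℝ) + 2 - α) * b n) :
    let u : ℕ → ℝ := fun n => ((n : ℝ) + 2) * b n * r ^ (n + 1)
    Summable u ∧ (Summable fun n : ℕ => ((n : ℝ) + 1) * u n) ∧
      ∑' n : ℕ, ((n : ℝ) + 1) * u n + (1 - α) * ∑' n : ℕ, u n ≤
        r * ∑' n : ℕ, ((n : ℝ) + 2) * ((n : ℝ) + 2 - α) * b n := by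
  intro u
  have hu : ∀ n : ℕ, ((n : ℝ) + 2 - α) * u n ≤
      r * (((n : ℝ) + 2) * ((n : ℝ) + 2 - α) * b n) := fun n => by
    have : 0 ≤ (n : ℝ) + 2 - α := by linarith
    have := hb n
    calc ((n : ℝ) + 2 - α) * u n = ((n : ℝ) + 2) * ((n : ℝ) + 2 - α) * b n * r ^ (n + 1) := by
          ring
      _ ≤ ((n : ℝ) + 2) * ((n : ℝ) + 2 - α) * b n * r := by
          gcongr
          exact pow_le_of_le_one hr₀ hr₁ n.succ_ne_zero
      _ = _ := mul_comm _ _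
  have hu_nonneg : ∀ n, 0 ≤ u n := fun n => by have := hb n; positivity
  have hu_sum : Summable fun n : ℕ => ((n : ℝ) + 2 - α) * u n :=
    (hB.mul_left r).of_nonneg_of_le (fun n => mul_nonneg (by linarith) (hu_nonneg n)) hu
  have hu₁ : Summable u := hu_sum.of_nonneg_of_le hu_nonneg
    fun n => le_mul_of_one_le_left (hu_nonneg n) (by linarith)
  have hu₂ : Summable fun n : ℕ => ((n : ℝ) + 1) * u n :=
    hu_sum.of_nonneg_of_le (fun n => mul_nonneg (by positivity) (hu_nonneg n))
      fun n => mul_le_mul_of_nonneg_right (by linarith) (hu_nonneg n)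
  refine ⟨hu₁, hu₂, ?_⟩
  calc ∑' n : ℕ, ((n : ℝ) + 1) * u n + (1 - α) * ∑' n : ℕ, u n
      = ∑' n : ℕ, ((n : ℝ) + 2 - α) * u n := by
        rw [← tsum_mul_left, ← hu₂.tsum_add (hu₁.mul_left _)]
        congr with n
        ring
    _ ≤ ∑' n : ℕ, r * (((n : ℝ) + 2) * ((n : ℝ) + 2 - α) * b n) :=
        hu_sum.tsum_le_tsum hu (hB.mul_left r)
    _ = r * ∑' n : ℕ, ((n : ℝ) + 2) * ((n : ℝ) + 2 - α) * b n := tsum_mul_left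

theorem norm_div_one_add_lt {E : Type*} [NormedDivisionRing E] {N T : E} {s t β : ℝ}
    (hβ : 0 < β) (hN : ‖N‖ ≤ s) (hT : ‖T‖ ≤ t) (h : s + β * t < β) : ‖N / (1 + T)‖ < β := by
  have hden : 1 - t ≤ ‖1 + T‖ := by
    have := norm_sub_le (1 + T) T
    simp only [add_sub_cancel_right, norm_one] at this
    linarith
  have hs : 0 ≤ s := (norm_nonneg N).trans hN
  have ht : t < 1 := by nlinarith
  rw [norm_div, div_lt_iff₀ (by linarith)]
  nlinarith

section PowerSeries

variable {𝕜 : Type*} [RCLike 𝕜]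

theorem summable_natCast_mul_norm {c : ℕ → 𝕜}
    (hc : Summable fun n : ℕ => (n : ℝ) * ((n : ℝ) - 1) * ‖c n‖) :
    Summable fun n : ℕ => (n : ℝ) * ‖c n‖ := by
  refine (summable_nat_add_iff 2).1 <| ((summable_nat_add_iff 2).2 hc).of_nonneg_of_le
    (fun n => by positivity) fun n => ?_
  push_cast
  nlinarith [mul_nonneg (mul_nonneg (by positivity : (0 : ℝ) ≤ n + 2) n.cast_nonneg)
    (norm_nonneg (c (n + 2)))]

theorem hasDerivAt_tsum_mul_pow {c : ℕ → 𝕜} (hc : Summable fun n : ℕ => (n : ℝ) * ‖c n‖)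
    {z : 𝕜} (hz : z ∈ ball (0 : 𝕜) 1) :
    HasDerivAt (fun w => ∑' n : ℕ, c n * w ^ n)
      (∑' n : ℕ, ((n : 𝕜) + 1) * c (n + 1) * z ^ n) z := by
  have hbound : ∀ (n : ℕ) (y : 𝕜), y ∈ ball (0 : 𝕜) 1 →
      ‖(n : 𝕜) * c n * y ^ (n - 1)‖ ≤ n * ‖c n‖ := fun n y hy => by
    rw [mem_ball_zero_iff] at hy
    rw [norm_mul, norm_mul, norm_pow, RCLike.norm_natCast]
    exact mul_le_of_le_one_right (by positivity) (pow_le_one₀ (norm_nonneg y) hy.le)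
  have hderiv : HasDerivAt (fun w => ∑' n : ℕ, c n * w ^ n)
      (∑' n : ℕ, (n : 𝕜) * c n * z ^ (n - 1)) z := by
    refine hasDerivAt_tsum_of_isPreconnected hc isOpen_ball (convex_ball 0 1).isPreconnected
      (fun n y _ => ?_) hbound (mem_ball_self one_pos) ?_ hz
    · simpa only [mul_comm, mul_assoc, mul_left_comm] using (hasDerivAt_pow n y).const_mul (c n)
    · refine summable_of_ne_finset_zero (s := {0}) fun n hn => ?_
      simp [zero_pow (Finset.notMem_singleton.1 hn)]
  convert hderiv using 1
  rw [tsum_eq_zero_add' ((summable_nat_add_iff 1).2 (hc.of_norm_bounded (hbound · z hz)))]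
  simp

theorem deriv_eq_tsum_of_hasSum {c : ℕ → 𝕜} (hc : Summable fun n : ℕ => (n : ℝ) * ‖c n‖)
    {f : 𝕜 → 𝕜} (hf : ∀ w ∈ ball (0 : 𝕜) 1, HasSum (fun n => c n * w ^ n) (f w))
    {z : 𝕜} (hz : z ∈ ball (0 : 𝕜) 1) :
    deriv f z = ∑' n : ℕ, ((n : 𝕜) + 1) * c (n + 1) * z ^ n :=
  ((hasDerivAt_tsum_mul_pow hc hz).congr_of_eventuallyEq <| Filter.eventually_of_mem
    (isOpen_ball.mem_nhds hz) fun w hw => (hf w hw).tsum_eq.symm).deriv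

theorem deriv_deriv_eq_tsum_of_hasSum {c : ℕ → 𝕜}
    (hc : Summable fun n : ℕ => (n : ℝ) * ((n : ℝ) - 1) * ‖c n‖)
    {f : 𝕜 → 𝕜} (hf : ∀ w ∈ ball (0 : 𝕜) 1, HasSum (fun n => c n * w ^ n) (f w))
    {z : 𝕜} (hz : z ∈ ball (0 : 𝕜) 1) :
    deriv (deriv f) z = ∑' n : ℕ, ((n : 𝕜) + 1) * ((n : 𝕜) + 2) * c (n + 2) * z ^ n := by
  have hc₁ := summable_natCast_mul_norm hc
  set c' : ℕ → 𝕜 := fun n => ((n : 𝕜) + 1) * c (n + 1)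
  have hnorm : ∀ n : ℕ, ‖c' n‖ = ((n + 1 : ℕ) : ℝ) * ‖c (n + 1)‖ := fun n => by
    rw [norm_mul, ← RCLike.norm_natCast (K := 𝕜)]
    push_cast
    rfl
  have hc' : Summable fun n : ℕ => (n : ℝ) * ‖c' n‖ := by
    refine ((summable_nat_add_iff 1).2 hc).congr fun n => ?_
    rw [hnorm]
    push_cast
    ring
  have hf' : ∀ w ∈ ball (0 : 𝕜) 1, HasSum (fun n => c' n * w ^ n) (deriv f w) := by
    intro w hw
    rw [deriv_eq_tsum_of_hasSum hc₁ hf hw]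
    refine (((summable_nat_add_iff 1).2 hc₁).of_norm_bounded fun n => ?_).hasSum
    rw [norm_mul, norm_pow, hnorm]
    exact mul_le_of_le_one_right (by positivity)
      (pow_le_one₀ (norm_nonneg w) (mem_ball_zero_iff.1 hw).le)
  rw [deriv_eq_tsum_of_hasSum hc' hf' hz]
  congr! 2 with n
  simp only [c']
  push_cast
  ring

theorem norm_mul_deriv_deriv_div_deriv_lt {α : ℝ} (hα : α < 1) {a : ℕ → 𝕜} (ha1 : a 1 = 1)
    {f : 𝕜 → 𝕜} (hf : ∀ w ∈ ball (0 : 𝕜) 1, HasSum (fun n => a n * w ^ n) (f w))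
    (hB : Summable fun n : ℕ => ((n : ℝ) + 2) * ((n : ℝ) + 2 - α) * ‖a (n + 2)‖)
    (hBle : ∑' n : ℕ, ((n : ℝ) + 2) * ((n : ℝ) + 2 - α) * ‖a (n + 2)‖ ≤ 1 - α)
    {z : 𝕜} (hz : z ∈ ball (0 : 𝕜) 1) :
    ‖z * deriv (deriv f) z / deriv f z‖ < 1 - α := by
  have hr : ‖z‖ < 1 := mem_ball_zero_iff.1 hz
  have hc : Summable fun n : ℕ => (n : ℝ) * ((n : ℝ) - 1) * ‖a n‖ := by
    refine (summable_nat_add_iff 2).1 <| hB.of_nonneg_of_le (fun n => ?_) fun n => ?_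
    · push_cast
      exact mul_nonneg (mul_nonneg (by positivity) (by linarith)) (norm_nonneg _)
    · push_cast
      gcongr
  obtain ⟨hu₁, hu₂, hu_le⟩ := summable_and_tsum_mul_pow_le hα (norm_nonneg z) hr.le
    (fun n => norm_nonneg (a (n + 2))) hB
  beta_reduce at hu₂ hu_le
  have hnorm : ∀ n : ℕ, ‖((n : 𝕜) + 2) * a (n + 2) * z ^ (n + 1)‖ =
      ((n : ℝ) + 2) * ‖a (n + 2)‖ * ‖z‖ ^ (n + 1) := fun n => by
    rw [norm_mul, norm_mul, norm_pow, show (n : 𝕜) + 2 = ((n + 2 : ℕ) : 𝕜) by push_cast; rfl,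
      RCLike.norm_natCast]
    push_cast
    rfl
  have hD : deriv f z = 1 + ∑' n : ℕ, ((n : 𝕜) + 2) * a (n + 2) * z ^ (n + 1) := by
    rw [deriv_eq_tsum_of_hasSum (summable_natCast_mul_norm hc) hf hz, tsum_eq_zero_add' ?_]
    · simp [ha1, add_assoc, one_add_one_eq_two]
    · exact (hu₁.of_norm_bounded fun n => (hnorm n).le).congr fun n => by push_cast; ring
  have hT : ‖∑' n : ℕ, ((n : 𝕜) + 2) * a (n + 2) * z ^ (n + 1)‖ ≤
      ∑' n : ℕ, ((n : ℝ) + 2) * ‖a (n + 2)‖ * ‖z‖ ^ (n + 1) :=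
    tsum_of_norm_bounded hu₁.hasSum fun n => (hnorm n).le
  have hN : ‖z * deriv (deriv f) z‖ ≤
      ∑' n : ℕ, ((n : ℝ) + 1) * (((n : ℝ) + 2) * ‖a (n + 2)‖ * ‖z‖ ^ (n + 1)) := by
    rw [deriv_deriv_eq_tsum_of_hasSum hc hf hz, ← tsum_mul_left]
    refine tsum_of_norm_bounded hu₂.hasSum fun n => le_of_eq ?_
    rw [← hnorm, show (n : ℝ) + 1 = ‖((n + 1 : ℕ) : 𝕜)‖ by rw [RCLike.norm_natCast]; push_cast; rfl,
      ← norm_mul]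
    congr 1
    push_cast
    ring
  rw [hD]
  refine norm_div_one_add_lt (by linarith) hN hT ?_
  calc _ ≤ ‖z‖ * ∑' n : ℕ, ((n : ℝ) + 2) * ((n : ℝ) + 2 - α) * ‖a (n + 2)‖ := hu_le
    _ ≤ ‖z‖ * (1 - α) := by gcongr
    _ < 1 - α := by nlinarith

end PowerSeries

theorem stmt_1_general (α : ℝ) (hα1 : α < 1) (a : ℕ → ℂ)
    (ha1 : a 1 = 1) (f : ℂ → ℂ)
    (hf : ∀ z ∈ ball (0 : ℂ) 1, HasSum (fun n : ℕ => a n * z ^ n) (f z))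
    (hsum : Summable fun n : ℕ => (n : ℝ) * ((n : ℝ) - 1) * ‖a n‖)
    (h : (∑' n : ℕ, (n : ℝ) * ((n : ℝ) - 1) * ‖a n‖) ≤ (1 - α) / (2 - α)) :
    ((Summable fun n : ℕ => ((n : ℝ) + 2) * (((n : ℝ) + 2) - α) * ‖a (n + 2)‖) ∧
      (∑' n : ℕ, ((n : ℝ) + 2) * (((n : ℝ) + 2) - α) * ‖a (n + 2)‖) ≤ 1 - α) ∧
    ∀ z ∈ ball (0 : ℂ) 1, ‖z * deriv (deriv f) z / deriv f z‖ < 1 - α := by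
  have hcoeff := summable_and_tsum_mul_sub_le_of_tsum_mul_sub_one_le hα1
    (b := fun n => ‖a n‖) (fun n => norm_nonneg _) hsum h
  exact ⟨hcoeff, fun z hz => norm_mul_deriv_deriv_div_deriv_lt hα1 ha1 hf hcoeff.1 hcoeff.2 hz⟩

/-- If `f(z) = z + Σ_{n≥2} a_n z^n` satisfies `Σ_{n≥2} n(n-1)|a_n| ≤ (1-α)/(2-α)`,
then `Σ_{n≥2} n(n-α)|a_n| ≤ 1-α` and `|z f''(z)/f'(z)| < 1-α` on the unit disk. -/
theorem stmt_1 (α : ℝ) (hα0 : 0 ≤ α) (hα1 : α < 1) (a : ℕ → ℂ)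
    (ha0 : a 0 = 0) (ha1 : a 1 = 1) (f : ℂ → ℂ)
    (hf : ∀ z ∈ ball (0 : ℂ) 1, HasSum (fun n : ℕ => a n * z ^ n) (f z))
    (hsum : Summable fun n : ℕ => (n : ℝ) * ((n : ℝ) - 1) * ‖a n‖)
    (h : (∑' n : ℕ, (n : ℝ) * ((n : ℝ) - 1) * ‖a n‖) ≤ (1 - α) / (2 - α)) :
    ((Summable fun n : ℕ => ((n : ℝ) + 2) * (((n : ℝ) + 2) - α) * ‖a (n + 2)‖) ∧
      (∑' n : ℕ, ((n : ℝ) + 2) * (((n : ℝ) + 2) - α) * ‖a (n + 2)‖) ≤ 1 - α) ∧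
    ∀ z ∈ ball (0 : ℂ) 1, ‖z * deriv (deriv f) z / deriv f z‖ < 1 - α :=
  stmt_1_general α hα1 a ha1 f hf hsum h
end

section
/- Let 0 ≤ α < 1. If f(z) = z + Σ_{n≥2} a_n z^n satisfies Σ_{n≥2} n(n-1)|a_n| ≤ 2(1-α)/(2-α), then Σ_{n≥2} (n-α)|a_n| ≤ 1-α. -/
/-!
Termwise, `n - α ≤ (2 - α)/2 · n(n - 1)` for every `n ≥ 2` once `α ≤ 1` (equality at `n = 2`),
so the first series is dominated by `(2 - α)/2` times the second, whose sum is at most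
`2(1 - α)/(2 - α)`.
-/

lemma add_two_sub_mul_le_mul_add_two_mul_add_one {α : ℝ} (hα : α ≤ 1) (n : ℕ) {x : ℝ} (hx : 0 ≤ x) :
    (((n : ℝ) + 2) - α) * x ≤ (2 - α) / 2 * (((n : ℝ) + 2) * ((n : ℝ) + 1) * x) := by
  have hcoeff : ((n : ℝ) + 2) - α ≤ (2 - α) / 2 * (((n : ℝ) + 2) * ((n : ℝ) + 1)) := by
    have hn : (0 : ℝ) ≤ n := n.cast_nonneg
    nlinarith [mul_nonneg hn (sub_nonneg.mpr hα)]
  calc (((n : ℝ) + 2) - α) * x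
      ≤ (2 - α) / 2 * (((n : ℝ) + 2) * ((n : ℝ) + 1)) * x :=
        mul_le_mul_of_nonneg_right hcoeff hx
    _ = (2 - α) / 2 * (((n : ℝ) + 2) * ((n : ℝ) + 1) * x) := by ring

theorem stmt_2_general (α : ℝ) (hα1 : α < 1) (a : ℕ → ℂ)
    (hsum : Summable fun n : ℕ => ((n : ℝ) + 2) * ((n : ℝ) + 1) * ‖a (n + 2)‖)
    (h : (∑' n : ℕ, ((n : ℝ) + 2) * ((n : ℝ) + 1) * ‖a (n + 2)‖) ≤ 2 * (1 - α) / (2 - α)) :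
    (Summable fun n : ℕ => (((n : ℝ) + 2) - α) * ‖a (n + 2)‖) ∧
      (∑' n : ℕ, (((n : ℝ) + 2) - α) * ‖a (n + 2)‖) ≤ 1 - α := by
  have h2α : 0 < 2 - α := by linarith
  have hle (n : ℕ) := add_two_sub_mul_le_mul_add_two_mul_add_one hα1.le n (norm_nonneg (a (n + 2)))
  have hnonneg (n : ℕ) : 0 ≤ (((n : ℝ) + 2) - α) * ‖a (n + 2)‖ :=
    mul_nonneg (by linarith [n.cast_nonneg (α := ℝ)]) (norm_nonneg _)
  have hdom := hsum.mul_left ((2 - α) / 2)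
  have hS := Summable.of_nonneg_of_le hnonneg hle hdom
  refine ⟨hS, ?_⟩
  calc (∑' n : ℕ, (((n : ℝ) + 2) - α) * ‖a (n + 2)‖)
      ≤ (2 - α) / 2 * ∑' n : ℕ, ((n : ℝ) + 2) * ((n : ℝ) + 1) * ‖a (n + 2)‖ := by
        rw [← tsum_mul_left]; exact hS.tsum_le_tsum hle hdom
    _ ≤ (2 - α) / 2 * (2 * (1 - α) / (2 - α)) := by gcongr
    _ = 1 - α := by field_simp

/-- If `Σ_{n≥2} n(n-1)|a_n| ≤ 2(1-α)/(2-α)` then `Σ_{n≥2} (n-α)|a_n| ≤ 1-α`. -/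
theorem stmt_2 (α : ℝ) (hα0 : 0 ≤ α) (hα1 : α < 1) (a : ℕ → ℂ)
    (hsum : Summable fun n : ℕ => ((n : ℝ) + 2) * ((n : ℝ) + 1) * ‖a (n + 2)‖)
    (h : (∑' n : ℕ, ((n : ℝ) + 2) * ((n : ℝ) + 1) * ‖a (n + 2)‖) ≤ 2 * (1 - α) / (2 - α)) :
    (Summable fun n : ℕ => (((n : ℝ) + 2) - α) * ‖a (n + 2)‖) ∧
      (∑' n : ℕ, (((n : ℝ) + 2) - α) * ‖a (n + 2)‖) ≤ 1 - α :=
  stmt_2_general α hα1 a hsum h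
end

section
/- Let β < 1 and α > 0, and set η₀ = (2α+β)/(2α+1). If f(z) = z + Σ_{n≥2} a_n z^n satisfies Σ_{n≥2} (αn² + (1-α)n - β)|a_n| ≤ 1-β, then Σ_{n≥2} (n - η₀)|a_n| ≤ 1 - η₀. -/
/-!
Since `α (n - 1)(n - 2) ≥ 0` for every integer `n ≥ 2`, each weight `n - η₀` is at most
`(αn² + (1 - α)n - β) / (2α + 1)`, and `1 - η₀ = (1 - β) / (2α + 1)`; the claim is the
termwise comparison of the two series divided by `2α + 1`.
-/

lemma two_mul_add_one_mul_sub_le {α x : ℝ} (hα : 0 ≤ α) (hx : 2 ≤ x) :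
    (2 * α + 1) * x - 2 * α ≤ α * x ^ 2 + (1 - α) * x := by
  nlinarith [mul_nonneg hα (mul_nonneg (by linarith : (0 : ℝ) ≤ x - 1) (by linarith : 0 ≤ x - 2))]

lemma sub_div_two_mul_add_one_le {α β x : ℝ} (hα : 0 ≤ α) (hx : 2 ≤ x) :
    x - (2 * α + β) / (2 * α + 1) ≤ (α * x ^ 2 + (1 - α) * x - β) / (2 * α + 1) := by
  have hc : 0 < 2 * α + 1 := by linarith
  rw [sub_div' hc.ne', div_le_div_iff_of_pos_right hc]
  linarith [two_mul_add_one_mul_sub_le hα hx]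

lemma summable_and_tsum_le_div {ι : Type*} {f g : ι → ℝ} {c B : ℝ} (hc : 0 ≤ c)
    (hf : ∀ i, 0 ≤ f i) (hfg : ∀ i, f i ≤ g i / c) (hg : Summable g) (hB : ∑' i, g i ≤ B) :
    Summable f ∧ ∑' i, f i ≤ B / c := by
  have hgc : Summable fun i => g i / c := hg.div_const c
  have hf_sum : Summable f := hgc.of_nonneg_of_le hf hfg
  refine ⟨hf_sum, ?_⟩
  calc ∑' i, f i ≤ ∑' i, g i / c := hf_sum.tsum_le_tsum hfg hgc
    _ = (∑' i, g i) / c := tsum_div_const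
    _ ≤ B / c := by gcongr

/-- With `η₀ = (2α+β)/(2α+1)`: if `Σ_{n≥2} (αn²+(1-α)n-β)|a_n| ≤ 1-β` then
`Σ_{n≥2} (n-η₀)|a_n| ≤ 1-η₀`. -/
theorem stmt_6 (α β : ℝ) (hβ : β < 1) (hα : 0 < α) (a : ℕ → ℂ)
    (hsum : Summable fun n : ℕ =>
      (α * ((n : ℝ) + 2) ^ 2 + (1 - α) * ((n : ℝ) + 2) - β) * ‖a (n + 2)‖)
    (h : (∑' n : ℕ, (α * ((n : ℝ) + 2) ^ 2 + (1 - α) * ((n : ℝ) + 2) - β) * ‖a (n + 2)‖)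
      ≤ 1 - β) :
    (Summable fun n : ℕ =>
      (((n : ℝ) + 2) - (2 * α + β) / (2 * α + 1)) * ‖a (n + 2)‖) ∧
      (∑' n : ℕ, (((n : ℝ) + 2) - (2 * α + β) / (2 * α + 1)) * ‖a (n + 2)‖)
        ≤ 1 - (2 * α + β) / (2 * α + 1) := by
  have hc : 0 < 2 * α + 1 := by linarith
  have hn : ∀ n : ℕ, (2 : ℝ) ≤ n + 2 := fun n => by linarith [n.cast_nonneg (α := ℝ)]
  have hη : (2 * α + β) / (2 * α + 1) < 1 := by rw [div_lt_one hc]; linarith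
  have hbound : 1 - (2 * α + β) / (2 * α + 1) = (1 - β) / (2 * α + 1) := by
    field_simp; ring
  rw [hbound]
  refine summable_and_tsum_le_div hc.le (fun n => ?_) (fun n => ?_) hsum h
  · exact mul_nonneg (by linarith [hn n]) (norm_nonneg _)
  · rw [mul_div_right_comm]
    exact mul_le_mul_of_nonneg_right (sub_div_two_mul_add_one_le hα.le (hn n)) (norm_nonneg _)
end

section
/- Let β < 1 and α ∈ ℝ with 2α + 2 - β > 0. If f(z) = z + Σ_{n≥2} a_n z^n satisfies Σ_{n≥2} n(n-1)|a_n| ≤ 2(1-β)/(2α+2-β), then Σ_{n≥2} (αn² + (1-α)n - β)|a_n| ≤ 1-β. -/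
/-!
Write `c(m) = α m² + (1 - α) m - β`. For `m ≥ 2` and `β ≤ 1` one has
`c(m) ≤ (2α + 2 - β)/2 · m(m - 1)`, the difference being `(m - 2)((1 - β)(m + 1) + m - 1)/2`,
so the weighted sum `Σ c(n)|aₙ|` is at most `(2α + 2 - β)/2 · Σ n(n - 1)|aₙ| ≤ 1 - β`.
Summability comes from `|c(m)| ≤ (|α| + 1 + |β|) m(m - 1)`, as `c(m) = α m(m - 1) + m - β`.
-/

lemma summable_mul_of_abs_le_mul {ι : Type*} {f g x : ι → ℝ} {C : ℝ}
    (hfg : ∀ i, |f i| ≤ C * g i) (hx : ∀ i, 0 ≤ x i) (hg : Summable fun i => g i * x i) :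
    Summable fun i => f i * x i :=
  (hg.mul_left C).of_norm_bounded fun i => by
    rw [Real.norm_eq_abs, abs_mul, abs_of_nonneg (hx i), ← mul_assoc]
    exact mul_le_mul_of_nonneg_right (hfg i) (hx i)

lemma tsum_le_mul_of_le_mul {ι : Type*} {f g : ι → ℝ} {K B : ℝ} (hK : 0 ≤ K)
    (hfg : ∀ i, f i ≤ K * g i) (hf : Summable f) (hg : Summable g) (hB : ∑' i, g i ≤ B) :
    ∑' i, f i ≤ K * B :=
  calc ∑' i, f i ≤ ∑' i, K * g i := hf.tsum_le_tsum hfg (hg.mul_left K)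
    _ = K * ∑' i, g i := tsum_mul_left
    _ ≤ K * B := mul_le_mul_of_nonneg_left hB hK

section Coefficient

-- `x + 2` stands for the index `m ≥ 2`, matching the shifted sums of the theorem.
variable {α β x : ℝ}

lemma coeff_le_mul_of_nonneg (hβ : β ≤ 1) (hx : 0 ≤ x) :
    α * (x + 2) ^ 2 + (1 - α) * (x + 2) - β ≤ (2 * α + 2 - β) / 2 * ((x + 2) * (x + 1)) := by
  have hdiff : (2 * α + 2 - β) / 2 * ((x + 2) * (x + 1)) - (α * (x + 2) ^ 2 + (1 - α) * (x + 2) - β)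
      = x * ((1 - β) * (x + 3) + x + 1) / 2 := by ring
  have : 0 ≤ x * ((1 - β) * (x + 3) + x + 1) / 2 := by
    have : 0 ≤ 1 - β := sub_nonneg.2 hβ
    positivity
  linarith

lemma abs_coeff_le_mul_of_nonneg (hx : 0 ≤ x) :
    |α * (x + 2) ^ 2 + (1 - α) * (x + 2) - β| ≤ (|α| + 1 + |β|) * ((x + 2) * (x + 1)) := by
  have hsplit : α * (x + 2) ^ 2 + (1 - α) * (x + 2) - β
      = α * ((x + 2) * (x + 1)) + (x + 2) - β := by ring
  have hw : 0 ≤ (x + 2) * (x + 1) := by positivity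
  calc |α * (x + 2) ^ 2 + (1 - α) * (x + 2) - β|
      ≤ |α * ((x + 2) * (x + 1)) + (x + 2)| + |β| := hsplit ▸ abs_sub _ _
    _ ≤ |α * ((x + 2) * (x + 1))| + |x + 2| + |β| := add_le_add_left (abs_add_le _ _) _
    _ = |α| * ((x + 2) * (x + 1)) + (x + 2) + |β| := by
        rw [abs_mul, abs_of_nonneg hw, abs_of_nonneg (by linarith : 0 ≤ x + 2)]
    _ ≤ (|α| + 1 + |β|) * ((x + 2) * (x + 1)) := by
        have hslack : (|α| + 1 + |β|) * ((x + 2) * (x + 1))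
            - (|α| * ((x + 2) * (x + 1)) + (x + 2) + |β|)
            = x * (x + 2) + |β| * (x * (x + 3) + 1) := by ring
        have : 0 ≤ x * (x + 2) + |β| * (x * (x + 3) + 1) := by positivity
        linarith

end Coefficient

/-- If `Σ_{n≥2} n(n-1)|a_n| ≤ 2(1-β)/(2α+2-β)` then
`Σ_{n≥2} (αn²+(1-α)n-β)|a_n| ≤ 1-β`. -/
theorem stmt_8 (α β : ℝ) (hβ : β < 1) (hpos : 0 < 2 * α + 2 - β) (a : ℕ → ℂ)
    (hsum : Summable fun n : ℕ => ((n : ℝ) + 2) * ((n : ℝ) + 1) * ‖a (n + 2)‖)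
    (h : (∑' n : ℕ, ((n : ℝ) + 2) * ((n : ℝ) + 1) * ‖a (n + 2)‖)
      ≤ 2 * (1 - β) / (2 * α + 2 - β)) :
    (Summable fun n : ℕ =>
      (α * ((n : ℝ) + 2) ^ 2 + (1 - α) * ((n : ℝ) + 2) - β) * ‖a (n + 2)‖) ∧
      (∑' n : ℕ, (α * ((n : ℝ) + 2) ^ 2 + (1 - α) * ((n : ℝ) + 2) - β) * ‖a (n + 2)‖)
        ≤ 1 - β := by
  have hS : Summable fun n : ℕ =>
      (α * ((n : ℝ) + 2) ^ 2 + (1 - α) * ((n : ℝ) + 2) - β) * ‖a (n + 2)‖ :=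
    summable_mul_of_abs_le_mul (fun n => abs_coeff_le_mul_of_nonneg n.cast_nonneg)
      (fun n => norm_nonneg _) hsum
  refine ⟨hS, ?_⟩
  have hterm : ∀ n : ℕ,
      (α * ((n : ℝ) + 2) ^ 2 + (1 - α) * ((n : ℝ) + 2) - β) * ‖a (n + 2)‖
        ≤ (2 * α + 2 - β) / 2 * (((n : ℝ) + 2) * ((n : ℝ) + 1) * ‖a (n + 2)‖) := fun n => by
    rw [← mul_assoc]
    exact mul_le_mul_of_nonneg_right (coeff_le_mul_of_nonneg hβ.le n.cast_nonneg) (norm_nonneg _)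
  calc _ ≤ (2 * α + 2 - β) / 2 * (2 * (1 - β) / (2 * α + 2 - β)) :=
        tsum_le_mul_of_le_mul (by positivity) hterm hS hsum h
    _ = 1 - β := by field_simp; exact mul_div_cancel_left₀ _ (by linarith)
end

section
/- Let 0 ≤ β < 1 and α > 0, and let η₀ = (2α+3β-2)/(2α+β). If the nonnegative reals a_n (n ≥ 2) satisfy Σ_{n≥2} n(n-η₀) a_n ≤ 1-η₀, then Σ_{n≥2} (αn² + (1-α)n - β) a_n ≤ 1-β. -/
/-!
With `η₀ = (2α+3β-2)/(2α+β)` one has, for every `n`,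
`αn² + (1-α)n - β = (2α+β)/2 · n(n-η₀) - β(n-1)(n-2)/2`,
so for `n ≥ 2` each coefficient of the second series is at most `(2α+β)/2` times the corresponding
coefficient of the first, and `(2α+β)/2 · (1-η₀) = 1-β`.
-/

theorem summable_and_tsum_le_mul_of_le_mul {f g : ℕ → ℝ} {c B : ℝ} (hc : 0 ≤ c)
    (hf : ∀ n, 0 ≤ f n) (hfg : ∀ n, f n ≤ c * g n) (hg : Summable g) (hB : ∑' n, g n ≤ B) :
    Summable f ∧ ∑' n, f n ≤ c * B := by
  have hf_sum : Summable f := (hg.mul_left c).of_nonneg_of_le hf hfg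
  refine ⟨hf_sum, ?_⟩
  calc ∑' n, f n ≤ ∑' n, c * g n := hf_sum.tsum_le_tsum hfg (hg.mul_left c)
    _ = c * ∑' n, g n := tsum_mul_left
    _ ≤ c * B := mul_le_mul_of_nonneg_left hB hc

section Coefficients

variable {α β η x : ℝ}

theorem quadratic_coeff_nonneg (hα : 0 ≤ α) (hβ : β ≤ 2) (hx : 2 ≤ x) :
    0 ≤ α * x ^ 2 + (1 - α) * x - β := by
  have hx0 : 0 ≤ x := by linarith
  have hx1 : 0 ≤ x - 1 := by linarith
  nlinarith [mul_nonneg (mul_nonneg hα hx0) hx1]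

theorem quadratic_coeff_le_mul (hβ : 0 ≤ β) (hη : (2 * α + β) * η = 2 * α + 3 * β - 2)
    (hx : 2 ≤ x) :
    α * x ^ 2 + (1 - α) * x - β ≤ (2 * α + β) / 2 * (x * (x - η)) := by
  have hgap : 0 ≤ β * ((x - 1) * (x - 2)) :=
    mul_nonneg hβ (mul_nonneg (by linarith) (by linarith))
  linear_combination hgap / 2 + x * hη / 2

end Coefficients

/-- With `η₀ = (2α+3β-2)/(2α+β)`: if `a_n ≥ 0` and `Σ_{n≥2} n(n-η₀)a_n ≤ 1-η₀` then
`Σ_{n≥2} (αn²+(1-α)n-β)a_n ≤ 1-β`. -/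
theorem stmt_14 (α β : ℝ) (hβ0 : 0 ≤ β) (hβ1 : β < 1) (hα : 0 < α) (a : ℕ → ℝ)
    (han : ∀ n, 0 ≤ a n)
    (hsum : Summable fun n : ℕ =>
      ((n : ℝ) + 2) * (((n : ℝ) + 2) - (2 * α + 3 * β - 2) / (2 * α + β)) * a (n + 2))
    (h : (∑' n : ℕ,
        ((n : ℝ) + 2) * (((n : ℝ) + 2) - (2 * α + 3 * β - 2) / (2 * α + β)) * a (n + 2))
      ≤ 1 - (2 * α + 3 * β - 2) / (2 * α + β)) :
    (Summable fun n : ℕ =>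
      (α * ((n : ℝ) + 2) ^ 2 + (1 - α) * ((n : ℝ) + 2) - β) * a (n + 2)) ∧
      (∑' n : ℕ, (α * ((n : ℝ) + 2) ^ 2 + (1 - α) * ((n : ℝ) + 2) - β) * a (n + 2))
        ≤ 1 - β := by
  set η := (2 * α + 3 * β - 2) / (2 * α + β)
  have hc : 0 < 2 * α + β := by linarith
  have hη : (2 * α + β) * η = 2 * α + 3 * β - 2 := mul_div_cancel₀ _ hc.ne'
  have hx (n : ℕ) : (2 : ℝ) ≤ n + 2 := by linarith [n.cast_nonneg (α := ℝ)]
  obtain ⟨hf, hle⟩ := summable_and_tsum_le_mul_of_le_mul (c := (2 * α + β) / 2) (by positivity)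
    (fun n =>
      mul_nonneg (quadratic_coeff_nonneg (β := β) hα.le (by linarith) (hx n)) (han (n + 2)))
    (fun n => by
      rw [← mul_assoc]
      exact mul_le_mul_of_nonneg_right (quadratic_coeff_le_mul hβ0 hη (hx n)) (han (n + 2)))
    hsum h
  exact ⟨hf, hle.trans_eq (by linear_combination -hη / 2)⟩
end

section
/- Let α ≥ 0, β ≥ 0, β < 1. If the nonnegative reals a_n (n ≥ 2) satisfy Σ_{n≥2} (αn² + (1-α)n - β) a_n ≤ 1-β, then Σ_{n≥2} n a_n ≤ 2(1-β)/(2α+2-β). -/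
/-!
The coefficient condition weights `a_n` by `w(n) = αn² + (1-α)n - β`, and
`2 w(n) - (2α + 2 - β) n = (n - 2)(2αn + β) ≥ 0` for `n ≥ 2`. Hence `(2α + 2 - β) n a_n ≤ 2 w(n) a_n`
termwise, and summing gives the bound.
-/

lemma mul_le_two_mul_coeff_weight {α β x : ℝ} (hα : 0 ≤ α) (hβ : 0 ≤ β) (hx : 2 ≤ x) :
    (2 * α + 2 - β) * x ≤ 2 * (α * x ^ 2 + (1 - α) * x - β) := by
  have key : 2 * (α * x ^ 2 + (1 - α) * x - β) - (2 * α + 2 - β) * x =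
      (x - 2) * (2 * α * x + β) := by
    ring
  have : 0 ≤ (x - 2) * (2 * α * x + β) := by
    apply mul_nonneg <;> nlinarith
  linarith

lemma summable_and_tsum_le_div_of_mul_le {ι : Type*} {f g : ι → ℝ} {c B : ℝ}
    (hf : ∀ i, 0 ≤ f i) (hc : 0 < c) (hfg : ∀ i, c * f i ≤ g i) (hg : Summable g)
    (hB : ∑' i, g i ≤ B) :
    Summable f ∧ ∑' i, f i ≤ B / c := by
  have hfg' : ∀ i, f i ≤ c⁻¹ * g i := fun i => by
    rw [inv_mul_eq_div, le_div_iff₀ hc, mul_comm]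
    exact hfg i
  have hf_sum : Summable f := .of_nonneg_of_le hf hfg' (hg.mul_left _)
  refine ⟨hf_sum, ?_⟩
  rw [le_div_iff₀ hc, mul_comm, ← tsum_mul_left]
  exact (hf_sum.mul_left c).tsum_le_tsum hfg hg |>.trans hB

/-- If `a_n ≥ 0` and `Σ_{n≥2} (αn²+(1-α)n-β)a_n ≤ 1-β` then
`Σ_{n≥2} n a_n ≤ 2(1-β)/(2α+2-β)`. -/
theorem stmt_17 (α β : ℝ) (hα : 0 ≤ α) (hβ0 : 0 ≤ β) (hβ1 : β < 1) (a : ℕ → ℝ)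
    (han : ∀ n, 0 ≤ a n)
    (hsum : Summable fun n : ℕ =>
      (α * ((n : ℝ) + 2) ^ 2 + (1 - α) * ((n : ℝ) + 2) - β) * a (n + 2))
    (h : (∑' n : ℕ, (α * ((n : ℝ) + 2) ^ 2 + (1 - α) * ((n : ℝ) + 2) - β) * a (n + 2))
      ≤ 1 - β) :
    (Summable fun n : ℕ => ((n : ℝ) + 2) * a (n + 2)) ∧
      (∑' n : ℕ, ((n : ℝ) + 2) * a (n + 2)) ≤ 2 * (1 - β) / (2 * α + 2 - β) := by
  have hterm : ∀ n : ℕ, (2 * α + 2 - β) * (((n : ℝ) + 2) * a (n + 2)) ≤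
      2 * ((α * ((n : ℝ) + 2) ^ 2 + (1 - α) * ((n : ℝ) + 2) - β) * a (n + 2)) := fun n => by
    rw [← mul_assoc, ← mul_assoc]
    exact mul_le_mul_of_nonneg_right (mul_le_two_mul_coeff_weight hα hβ0 (by simp)) (han _)
  refine summable_and_tsum_le_div_of_mul_le (fun n => mul_nonneg (by positivity) (han _))
    (by linarith) hterm (hsum.mul_left 2) ?_
  rw [tsum_mul_left]
  linarith
end
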